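/- arXiv:0903.5295 — 15 statements merged into one kernel-verified Lean document; each statement's English description precedes it below -/
import Mathlib

section
/- A right ideal P ⊊ R is completely prime if and only if every nonzero R-module endomorphism of R/P is injective. -/
/-!
Every endomorphism `f` of the cyclic module `R ⧸ P` is determined by the image of `1 + P`, and
writing that image as `a + P` shows that `f` is left multiplication by `a`; conversely left
multiplication by `a` is well defined on `R ⧸ P` exactly when `a P ⊆ P`. Such a map vanishes iff
`a ∈ P` and is injective iff `a b ∈ P` forces `b ∈ P`, which turns the two sides of the
equivalence into each other.
-/

namespace Submodule

variable {R : Type*} [Ring R] (P : Submodule Rᵐᵒᵖ R)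

def quotMulLeft (a : R) (ha : ∀ p ∈ P, a * p ∈ P) : Module.End Rᵐᵒᵖ (R ⧸ P) :=
  P.mapQ P (LinearMap.mulLeft Rᵐᵒᵖ a) ha

variable {P}

@[simp]
lemma quotMulLeft_mk {a : R} (ha : ∀ p ∈ P, a * p ∈ P) (x : R) :
    P.quotMulLeft a ha (Quotient.mk x) = Quotient.mk (a * x) :=
  rfl

lemma Quotient.mk_eq_op_smul_mk_one (x : R) :
    (Quotient.mk x : R ⧸ P) = MulOpposite.op x • Quotient.mk 1 := by
  rw [← Quotient.mk_smul, MulOpposite.smul_eq_mul_unop, MulOpposite.unop_op, one_mul]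

lemma exists_eq_quotMulLeft (f : Module.End Rᵐᵒᵖ (R ⧸ P)) :
    ∃ (a : R) (ha : ∀ p ∈ P, a * p ∈ P), f = P.quotMulLeft a ha := by
  obtain ⟨a, ha⟩ := Quotient.mk_surjective P (f (Quotient.mk 1))
  have hf : ∀ x : R, f (Quotient.mk x) = Quotient.mk (a * x) := fun x ↦ by
    rw [Quotient.mk_eq_op_smul_mk_one x, map_smul, ← ha, ← Quotient.mk_smul,
      MulOpposite.smul_eq_mul_unop, MulOpposite.unop_op]
  have haP : ∀ p ∈ P, a * p ∈ P := fun p hp ↦ by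
    rw [← Quotient.mk_eq_zero, ← hf, (Quotient.mk_eq_zero P).2 hp, map_zero]
  exact ⟨a, haP, linearMap_qext P (LinearMap.ext hf)⟩

lemma quotMulLeft_eq_zero_iff {a : R} (ha : ∀ p ∈ P, a * p ∈ P) :
    P.quotMulLeft a ha = 0 ↔ a ∈ P := by
  refine ⟨fun h ↦ ?_, fun h ↦ linearMap_qext P (LinearMap.ext fun x ↦ ?_)⟩
  · simpa using LinearMap.congr_fun h (Quotient.mk 1)
  · simpa [Quotient.mk_eq_zero] using P.smul_mem (MulOpposite.op x) h

lemma quotMulLeft_injective_iff {a : R} (ha : ∀ p ∈ P, a * p ∈ P) :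
    Function.Injective (P.quotMulLeft a ha) ↔ ∀ b, a * b ∈ P → b ∈ P := by
  simp only [injective_iff_map_eq_zero, (Quotient.mk_surjective P).forall, quotMulLeft_mk,
    Quotient.mk_eq_zero]

end Submodule

theorem completelyPrime_iff_endomorphisms_injective_general
    {R : Type*} [Ring R] (P : Submodule Rᵐᵒᵖ R) :
    (∀ a b : R, (∀ p ∈ P, a * p ∈ P) → a * b ∈ P → a ∈ P ∨ b ∈ P) ↔
    (∀ f : Module.End Rᵐᵒᵖ (R ⧸ P), f ≠ 0 → Function.Injective f) := by
  constructor
  · intro hP f hf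
    obtain ⟨a, ha, rfl⟩ := Submodule.exists_eq_quotMulLeft f
    have haP : a ∉ P := mt (Submodule.quotMulLeft_eq_zero_iff ha).2 hf
    exact (Submodule.quotMulLeft_injective_iff ha).2 fun b hab ↦ (hP a b ha hab).resolve_left haP
  · intro h a b ha hab
    refine or_iff_not_imp_left.2 fun haP ↦ ?_
    have hf : P.quotMulLeft a ha ≠ 0 := mt (Submodule.quotMulLeft_eq_zero_iff ha).1 haP
    exact (Submodule.quotMulLeft_injective_iff ha).1 (h _ hf) b hab

/-- A proper right ideal `P ⊊ R` is completely prime iff every nonzero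
`R`-module endomorphism of `R/P` is injective. -/
theorem completelyPrime_iff_endomorphisms_injective
    {R : Type*} [Ring R] (P : Submodule Rᵐᵒᵖ R) (hP : P ≠ ⊤) :
    (∀ a b : R, (∀ p ∈ P, a * p ∈ P) → a * b ∈ P → a ∈ P ∨ b ∈ P) ↔
    (∀ f : Module.End Rᵐᵒᵖ (R ⧸ P), f ≠ 0 → Function.Injective f) :=
  completelyPrime_iff_endomorphisms_injective_general P
end

section
/- If P is a completely prime right ideal of a ring R, then the right R-module R/P is indecomposable. -/
/-- A right ideal `P ⊊ R` is completely prime if `aP ⊆ P` and `ab ∈ P` imply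
`a ∈ P` or `b ∈ P`. -/
def IsCompletelyPrimeRightIdeal {R : Type*} [Ring R] (P : Submodule Rᵐᵒᵖ R) : Prop :=
  P ≠ ⊤ ∧ ∀ a b : R, (∀ p ∈ P, a * p ∈ P) → a * b ∈ P → a ∈ P ∨ b ∈ P

/-!
A decomposition `R/P = N ⊕ N'` gives an idempotent endomorphism `f` of `R/P`. Writing
`f(1 + P) = a + P`, the map `f` is left multiplication by `a`, so `aP ⊆ P`, and idempotency says
`a(a - 1) ∈ P`. Complete primality gives `a ∈ P`, i.e. `f = 0` and `N = 0`, or `a - 1 ∈ P`,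
i.e. `f = 1` and `N' = 0`.
-/

theorem Submodule.eq_bot_or_eq_top_of_isCompl {S M : Type*} [Ring S] [AddCommGroup M]
    [Module S M] (h : ∀ f : Module.End S M, IsIdempotentElem f → f = 0 ∨ f = 1)
    {N N' : Submodule S M} (hc : IsCompl N N') : N = ⊥ ∨ N = ⊤ := by
  rcases h _ (isIdempotentElem_projection hc) with h0 | h1
  · left
    rw [← range_projection hc, h0, LinearMap.range_zero]
  · right
    apply eq_top_of_isCompl_bot
    rwa [← ker_projection hc, h1, Module.End.one_eq_id, LinearMap.ker_id] at hc

namespace RightIdeal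

open MulOpposite Submodule.Quotient

variable {R : Type*} [Ring R] {P : Submodule Rᵐᵒᵖ R}

theorem mk_mul (a r : R) : (mk (a * r) : R ⧸ P) = op r • mk a := by
  rw [← mk_smul, op_smul_eq_mul]

theorem linearMap_ext {M : Type*} [AddCommGroup M] [Module Rᵐᵒᵖ M] {f g : R ⧸ P →ₗ[Rᵐᵒᵖ] M}
    (h : f (mk 1) = g (mk 1)) : f = g :=
  Submodule.linearMap_qext _ (LinearMap.ext_ring_op h)

theorem End.apply_mk {f : Module.End Rᵐᵒᵖ (R ⧸ P)} {a : R} (ha : mk a = f (mk 1)) (r : R) :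
    f (mk r) = mk (a * r) := by
  rw [mk_mul, ha, ← map_smul, ← mk_mul, one_mul]

theorem End.mul_mem_of_mem {f : Module.End Rᵐᵒᵖ (R ⧸ P)} {a : R} (ha : mk a = f (mk 1)) {p : R}
    (hp : p ∈ P) : a * p ∈ P := by
  rw [← Submodule.Quotient.mk_eq_zero, ← End.apply_mk ha, (mk_eq_zero P).2 hp, map_zero]

theorem End.mul_sub_one_mem_of_isIdempotentElem {f : Module.End Rᵐᵒᵖ (R ⧸ P)}
    (hf : IsIdempotentElem f) {a : R} (ha : mk a = f (mk 1)) : a * (a - 1) ∈ P := by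
  have : (mk (a * a) : R ⧸ P) = mk a := by
    rw [← End.apply_mk ha, ha, ← Module.End.mul_apply, hf.eq]
  rwa [Submodule.Quotient.eq, ← mul_sub_one] at this

end RightIdeal

namespace IsCompletelyPrimeRightIdeal

open Submodule.Quotient RightIdeal

variable {R : Type*} [Ring R] {P : Submodule Rᵐᵒᵖ R}

theorem isIdempotentElem_eq_zero_or_eq_one (hP : IsCompletelyPrimeRightIdeal P)
    {f : Module.End Rᵐᵒᵖ (R ⧸ P)} (hf : IsIdempotentElem f) : f = 0 ∨ f = 1 := by
  obtain ⟨a, ha⟩ := mk_surjective P (f (mk 1))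
  rcases hP.2 a (a - 1) (fun _ => End.mul_mem_of_mem ha)
      (End.mul_sub_one_mem_of_isIdempotentElem hf ha) with h | h
  · left
    apply linearMap_ext
    rw [← ha, (mk_eq_zero P).2 h, LinearMap.zero_apply]
  · right
    apply linearMap_ext
    rwa [← ha, Module.End.one_apply, Submodule.Quotient.eq]

end IsCompletelyPrimeRightIdeal

/-- If `P` is a completely prime right ideal of `R`, then the right `R`-module
`R/P` is indecomposable. -/
theorem quotient_indecomposable_of_completelyPrime
    {R : Type*} [Ring R] (P : Submodule Rᵐᵒᵖ R)
    (hP : IsCompletelyPrimeRightIdeal P) :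
    Nontrivial (R ⧸ P) ∧
      ∀ N N' : Submodule Rᵐᵒᵖ (R ⧸ P), IsCompl N N' → N = ⊥ ∨ N = ⊤ :=
  ⟨Submodule.Quotient.nontrivial_iff.2 hP.1, fun _ _ =>
    Submodule.eq_bot_or_eq_top_of_isCompl fun _ => hP.isIdempotentElem_eq_zero_or_eq_one⟩
end

section
/- If P is a right ideal of a ring R such that End_R(R/P) is a division ring, then P is a completely prime right ideal. -/
theorem Submodule.ne_top_of_nontrivial_end_quotient {S M : Type*} [Ring S] [AddCommGroup M]
    [Module S M] (P : Submodule S M) [Nontrivial (Module.End S (M ⧸ P))] : P ≠ ⊤ := by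
  intro hP
  have : Subsingleton (M ⧸ P) := Submodule.Quotient.subsingleton_iff.mpr hP
  exact not_subsingleton (Module.End S (M ⧸ P)) inferInstance

namespace Submodule

variable {R : Type*} [Ring R] (P : Submodule Rᵐᵒᵖ R) {a : R}

def mulLeftQuotient (a : R) (ha : ∀ p ∈ P, a * p ∈ P) : Module.End Rᵐᵒᵖ (R ⧸ P) :=
  P.mapQ P (DistribSMul.toLinearMap Rᵐᵒᵖ R a) ha

@[simp]
theorem mulLeftQuotient_mk (ha : ∀ p ∈ P, a * p ∈ P) (x : R) :
    P.mulLeftQuotient a ha (Quotient.mk x) = Quotient.mk (a * x) :=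
  rfl

theorem mulLeftQuotient_ne_zero (ha : ∀ p ∈ P, a * p ∈ P) (haP : a ∉ P) :
    P.mulLeftQuotient a ha ≠ 0 := by
  intro h
  have h1 := LinearMap.congr_fun h (Quotient.mk 1)
  rw [mulLeftQuotient_mk, mul_one, LinearMap.zero_apply, Quotient.mk_eq_zero] at h1
  exact haP h1

theorem mem_of_mul_mem_of_isUnit_mulLeftQuotient (ha : ∀ p ∈ P, a * p ∈ P)
    (hu : IsUnit (P.mulLeftQuotient a ha)) {b : R} (hab : a * b ∈ P) : b ∈ P := by
  have hinj := ((Module.End.isUnit_iff _).mp hu).injective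
  rw [← Quotient.mk_eq_zero]
  apply hinj
  rw [mulLeftQuotient_mk, map_zero, Quotient.mk_eq_zero]
  exact hab

end Submodule

/-- If `End_R(R/P)` is a division ring (nontrivial with all nonzero elements
invertible), then `P` is a completely prime right ideal. -/
theorem completelyPrime_of_end_divisionRing
    {R : Type*} [Ring R] (P : Submodule Rᵐᵒᵖ R)
    (hnt : Nontrivial (Module.End Rᵐᵒᵖ (R ⧸ P)))
    (hdiv : ∀ f : Module.End Rᵐᵒᵖ (R ⧸ P), f ≠ 0 → IsUnit f) :
    IsCompletelyPrimeRightIdeal P := by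
  refine ⟨P.ne_top_of_nontrivial_end_quotient, fun a b ha hab => ?_⟩
  by_cases haP : a ∈ P
  · exact Or.inl haP
  · exact Or.inr (P.mem_of_mul_mem_of_isUnit_mulLeftQuotient ha
      (hdiv _ (P.mulLeftQuotient_ne_zero ha haP)) hab)
end

section
/- Every maximal right ideal of a ring R is a completely prime right ideal. -/
theorem Submodule.comap_eq_top_of_isCoatom {S M N : Type*} [Semiring S] [AddCommMonoid M]
    [AddCommMonoid N] [Module S M] [Module S N] {P : Submodule S M} (hP : IsCoatom P)
    {Q : Submodule S N} {f : M →ₗ[S] N} (hPQ : P ≤ Q.comap f) {b : M} (hbQ : f b ∈ Q)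
    (hbP : b ∉ P) : Q.comap f = ⊤ :=
  hP.lt_iff.mp (SetLike.lt_iff_le_and_exists.mpr ⟨hPQ, b, hbQ, hbP⟩)

theorem mem_of_mul_mem_of_isCoatom {R : Type*} [Ring R] {P : Submodule Rᵐᵒᵖ R}
    (hP : IsCoatom P) {a b : R} (ha : ∀ p ∈ P, a * p ∈ P) (hab : a * b ∈ P) (hb : b ∉ P) :
    a ∈ P := by
  let leftMul : R →ₗ[Rᵐᵒᵖ] R := DistribSMul.toLinearMap Rᵐᵒᵖ R a
  have htop : P.comap leftMul = ⊤ := Submodule.comap_eq_top_of_isCoatom hP ha hab hb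
  simpa [leftMul] using htop.ge (Submodule.mem_top : (1 : R) ∈ ⊤)

/-- Every maximal right ideal of a ring is a completely prime right ideal. -/
theorem maximal_rightIdeal_completelyPrime
    {R : Type*} [Ring R] (P : Submodule Rᵐᵒᵖ R) (hP : IsCoatom P) :
    IsCompletelyPrimeRightIdeal P :=
  ⟨hP.1, fun _ _ ha hab => or_iff_not_imp_right.mpr (mem_of_mul_mem_of_isCoatom hP ha hab)⟩
end

section
/- A nonzero ring R is a division ring if and only if every proper right ideal of R is completely prime. -/
section RightIdeal

variable {R : Type*} [Ring R]

theorem mem_rightIdeal_span_singleton {x y : R} :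
    x ∈ Submodule.span Rᵐᵒᵖ {y} ↔ ∃ c : R, y * c = x := by
  simp only [Submodule.mem_span_singleton, MulOpposite.smul_eq_mul_unop,
    MulOpposite.op_surjective.exists, MulOpposite.unop_op]

theorem rightIdeal_eq_top_of_isUnit_mem {P : Submodule Rᵐᵒᵖ R} {u : R} (hu : IsUnit u)
    (huP : u ∈ P) : P = ⊤ := by
  refine Submodule.eq_top_iff'.2 fun x => ?_
  have hx : u * (↑hu.unit⁻¹ * x) = x := by rw [← mul_assoc, hu.mul_val_inv, one_mul]
  simpa [MulOpposite.smul_eq_mul_unop, hx] using P.smul_mem (.op (↑hu.unit⁻¹ * x)) huP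

theorem rightIdeal_eq_bot_of_ne_top (h : ∀ a : R, a ≠ 0 → IsUnit a) {P : Submodule Rᵐᵒᵖ R}
    (hP : P ≠ ⊤) : P = ⊥ :=
  (Submodule.eq_bot_iff P).2 fun p hp => by_contra fun hp0 =>
    hP (rightIdeal_eq_top_of_isUnit_mem (h p hp0) hp)

theorem isCompletelyPrimeRightIdeal_of_forall_isUnit (h : ∀ a : R, a ≠ 0 → IsUnit a)
    {P : Submodule Rᵐᵒᵖ R} (hP : P ≠ ⊤) : IsCompletelyPrimeRightIdeal P := by
  obtain rfl := rightIdeal_eq_bot_of_ne_top h hP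
  refine ⟨hP, fun a b _ hab => ?_⟩
  simp only [Submodule.mem_bot] at hab ⊢
  by_cases ha : a = 0
  · exact .inl ha
  · exact .inr ((h a ha).mul_right_eq_zero.1 hab)

theorem noZeroDivisors_of_isCompletelyPrimeRightIdeal_bot
    (h : IsCompletelyPrimeRightIdeal (⊥ : Submodule Rᵐᵒᵖ R)) : NoZeroDivisors R where
  eq_zero_or_eq_zero_of_mul_eq_zero {a b} hab := by
    simpa only [Submodule.mem_bot] using
      h.2 a b (fun p hp => by rw [Submodule.mem_bot] at hp ⊢; rw [hp, mul_zero]) (Submodule.mem_bot _ |>.2 hab)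

theorem mul_mem_rightIdeal_span_mul_self (a : R) {p : R}
    (hp : p ∈ Submodule.span Rᵐᵒᵖ {a * a}) : a * p ∈ Submodule.span Rᵐᵒᵖ {a * a} := by
  obtain ⟨c, rfl⟩ := mem_rightIdeal_span_singleton.1 hp
  exact mem_rightIdeal_span_singleton.2 ⟨a * c, by simp only [mul_assoc]⟩

theorem exists_mul_eq_one_of_forall_isCompletelyPrimeRightIdeal [NoZeroDivisors R]
    (h : ∀ P : Submodule Rᵐᵒᵖ R, P ≠ ⊤ → IsCompletelyPrimeRightIdeal P) {a : R} (ha : a ≠ 0) :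
    ∃ r : R, a * r = 1 := by
  set P := Submodule.span Rᵐᵒᵖ {a * a}
  by_cases hP : P = ⊤
  · obtain ⟨c, hc⟩ := mem_rightIdeal_span_singleton.1 (hP ▸ Submodule.mem_top : (1 : R) ∈ P)
    exact ⟨a * c, by rw [← mul_assoc, hc]⟩
  · have haP : a ∈ P := ((h P hP).2 a a (fun p => mul_mem_rightIdeal_span_mul_self a)
      (Submodule.subset_span rfl)).elim id id
    obtain ⟨c, hc⟩ := mem_rightIdeal_span_singleton.1 haP
    exact ⟨c, mul_left_cancel₀ ha (by rw [← mul_assoc, hc, mul_one])⟩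

theorem isUnit_of_forall_isCompletelyPrimeRightIdeal
    (h : ∀ P : Submodule Rᵐᵒᵖ R, P ≠ ⊤ → IsCompletelyPrimeRightIdeal P) {a : R} (ha : a ≠ 0) :
    IsUnit a := by
  have hbot : (⊥ : Submodule Rᵐᵒᵖ R) ≠ ⊤ := fun hbot =>
    ha ((Submodule.mem_bot _).1 (hbot ▸ Submodule.mem_top))
  have := noZeroDivisors_of_isCompletelyPrimeRightIdeal_bot (h ⊥ hbot)
  obtain ⟨r, hr⟩ := exists_mul_eq_one_of_forall_isCompletelyPrimeRightIdeal h ha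
  exact .of_mul_eq_one r hr

end RightIdeal

theorem divisionRing_iff_all_proper_rightIdeals_completelyPrime_general
    {R : Type*} [Ring R] :
    (∀ a : R, a ≠ 0 → IsUnit a) ↔
      ∀ P : Submodule Rᵐᵒᵖ R, P ≠ ⊤ → IsCompletelyPrimeRightIdeal P :=
  ⟨fun h _ => isCompletelyPrimeRightIdeal_of_forall_isUnit h,
    fun h _ => isUnit_of_forall_isCompletelyPrimeRightIdeal h⟩

/-- A nonzero ring `R` is a division ring iff every proper right ideal of `R`
is completely prime. -/
theorem divisionRing_iff_all_proper_rightIdeals_completelyPrime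
    {R : Type*} [Ring R] [Nontrivial R] :
    (∀ a : R, a ≠ 0 → IsUnit a) ↔
      ∀ P : Submodule Rᵐᵒᵖ R, P ≠ ⊤ → IsCompletelyPrimeRightIdeal P :=
  divisionRing_iff_all_proper_rightIdeals_completelyPrime_general
end

section
/- Let f : R → S be a ring homomorphism, Q a completely prime right ideal of S, and P := f⁻¹(Q). If f maps the idealizer of P into the idealizer of Q, then P is a completely prime right ideal of R. -/
theorem rightIdeal_eq_top_iff_one {R : Type*} [Ring R]
    (I : Submodule Rᵐᵒᵖ R) : I = ⊤ ↔ (1 : R) ∈ I :=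
  ⟨fun h => h ▸ Submodule.mem_top,
    fun h => Submodule.eq_top_iff'.2 fun r => by simpa using I.smul_mem (MulOpposite.op r) h⟩

/-- If `f : R → S` is a ring homomorphism, `Q` a completely prime right ideal of `S`,
`P = f⁻¹(Q)`, and `f` maps the idealizer of `P` into the idealizer of `Q`, then `P`
is a completely prime right ideal of `R`. -/
theorem completelyPrime_comap
    {R S : Type*} [Ring R] [Ring S] (f : R →+* S)
    (Q : Submodule Sᵐᵒᵖ S) (hQ : IsCompletelyPrimeRightIdeal Q)
    (P : Submodule Rᵐᵒᵖ R) (hP : ∀ r : R, r ∈ P ↔ f r ∈ Q)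
    (hIdealizer : ∀ x : R, (∀ p ∈ P, x * p ∈ P) → ∀ q ∈ Q, f x * q ∈ Q) :
    IsCompletelyPrimeRightIdeal P := by
  obtain ⟨hQ_ne_top, hQ_prime⟩ := hQ
  refine ⟨fun hP_top => hQ_ne_top ?_, fun a b ha hab => ?_⟩
  · rw [rightIdeal_eq_top_iff_one] at hP_top ⊢
    simpa using (hP 1).1 hP_top
  · rw [hP, map_mul] at hab
    simpa only [hP] using hQ_prime (f a) (f b) (hIdealizer a ha) hab
end

section
/- Let F be an Oka family of right ideals in a ring R. Then every right ideal that is maximal in the complement of F is a completely prime right ideal. -/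
/-- For `a ∈ R` and a right ideal `I`, the right ideal `a⁻¹I = {r : R | a * r ∈ I}`. -/
def rdiv {R : Type*} [Ring R] (a : R) (I : Submodule Rᵐᵒᵖ R) : Submodule Rᵐᵒᵖ R where
  carrier := {r : R | a * r ∈ I}
  add_mem' hx hy := by simpa [mul_add] using I.add_mem hx hy
  zero_mem' := by simp
  smul_mem' c x hx := by
    simpa [MulOpposite.smul_eq_mul_unop, ← mul_assoc] using I.smul_mem c hx

/-- An Oka family of right ideals: it contains `R`, and whenever `I + aR` and
`a⁻¹I` belong to the family, so does `I`. -/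
def IsOkaFamily {R : Type*} [Ring R] (F : Set (Submodule Rᵐᵒᵖ R)) : Prop :=
  ⊤ ∈ F ∧ ∀ (I : Submodule Rᵐᵒᵖ R) (a : R),
    I ⊔ Submodule.span Rᵐᵒᵖ {a} ∈ F → rdiv a I ∈ F → I ∈ F

theorem lt_rdiv_of_mul_mem {R : Type*} [Ring R] {I : Submodule Rᵐᵒᵖ R} {a b : R}
    (ha : ∀ p ∈ I, a * p ∈ I) (hab : a * b ∈ I) (hb : b ∉ I) : I < rdiv a I :=
  SetLike.lt_iff_le_and_exists.2 ⟨ha, b, hab, hb⟩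

/-- Completely Prime Ideal Principle: if `F` is an Oka family of right ideals,
then every right ideal maximal in the complement of `F` is completely prime. -/
theorem completelyPrimeIdealPrinciple
    {R : Type*} [Ring R] (F : Set (Submodule Rᵐᵒᵖ R)) (hF : IsOkaFamily F)
    (P : Submodule Rᵐᵒᵖ R) (hP : P ∉ F) (hmax : ∀ J : Submodule Rᵐᵒᵖ R, P < J → J ∈ F) :
    IsCompletelyPrimeRightIdeal P := by
  refine ⟨fun hPtop => hP (hPtop ▸ hF.1), fun a b ha hab => ?_⟩
  by_contra! hab'
  obtain ⟨haP, hbP⟩ := hab'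
  have hsup : P ⊔ Submodule.span Rᵐᵒᵖ {a} ∈ F := hmax _ (Submodule.lt_sup_iff_notMem.2 haP)
  have hrdiv : rdiv a P ∈ F := hmax _ (lt_rdiv_of_mul_mem ha hab hbP)
  exact hP (hF.2 P a hsup hrdiv)
end

section
/- Let F be a right Oka family in a ring R such that every nonempty chain of right ideals in the complement F' has an upper bound in F'. If every completely prime right ideal of R belongs to F, then every right ideal of R belongs to F. -/
/-! By Zorn's lemma, a right ideal outside `F` lies below a maximal one `M`. If `aM ⊆ M` and
`ab ∈ M` with `a, b ∉ M`, then `M + aR` and `a⁻¹M` strictly contain `M`, so both lie in `F`,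
and the Oka property puts `M` in `F`. So `M` is completely prime, hence in `F` after all. -/

open Submodule

theorem IsOkaFamily.isCompletelyPrimeRightIdeal_of_maximal_not_mem {R : Type*} [Ring R]
    {F : Set (Submodule Rᵐᵒᵖ R)} (hF : IsOkaFamily F) {M : Submodule Rᵐᵒᵖ R}
    (hM : Maximal (· ∉ F) M) : IsCompletelyPrimeRightIdeal M := by
  refine ⟨fun htop => hM.prop (htop ▸ hF.1), fun a b hstable hab => ?_⟩
  by_contra! ⟨ha, hb⟩
  refine hM.prop (hF.2 M a ?_ ?_)
  · exact not_not.mp <| hM.not_prop_of_gt <|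
      left_lt_sup.mpr (mt (span_singleton_le_iff_mem a M).mp ha)
  · exact not_not.mp <| hM.not_prop_of_gt <|
      SetLike.lt_iff_le_and_exists.mpr ⟨hstable, b, hab, hb⟩

/-- CPIP Supplement (3): if `F` is a right Oka family such that every nonempty
chain in the complement `F'` has an upper bound in `F'`, and every completely
prime right ideal belongs to `F`, then every right ideal belongs to `F`. -/
theorem completelyPrimeIdealPrinciple_supplement
    {R : Type*} [Ring R] (F : Set (Submodule Rᵐᵒᵖ R)) (hF : IsOkaFamily F)
    (hchain : ∀ C : Set (Submodule Rᵐᵒᵖ R), C ⊆ Fᶜ → IsChain (· ≤ ·) C →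
      C.Nonempty → ∃ B ∉ F, ∀ I ∈ C, I ≤ B)
    (hprime : ∀ P : Submodule Rᵐᵒᵖ R, IsCompletelyPrimeRightIdeal P → P ∈ F) :
    ∀ I : Submodule Rᵐᵒᵖ R, I ∈ F := by
  intro I
  by_contra hI
  obtain ⟨M, -, hM⟩ := zorn_le_nonempty₀ Fᶜ
    (fun C hCF hC J hJ => hchain C hCF hC ⟨J, hJ⟩) I hI
  exact hM.prop (hprime M (hF.isCompletelyPrimeRightIdeal_of_maximal_not_mem hM))
end

section
/- In any ring R, the family of finitely generated right ideals is a right Oka family; consequently a right ideal maximal with respect to not being finitely generated is completely prime. -/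
open Submodule

section

variable {R : Type*} [Ring R]

theorem rightIdeal_top_fg : (⊤ : Submodule Rᵐᵒᵖ R).FG :=
  ⟨{1}, eq_top_iff.2 fun x _ => by
    simpa using mem_span_singleton.2 ⟨MulOpposite.op x, one_mul x⟩⟩

theorem rdiv_eq_comap (a : R) (I : Submodule Rᵐᵒᵖ R) :
    rdiv a I = I.comap (DistribSMul.toLinearMap Rᵐᵒᵖ R a) :=
  rfl

theorem range_smul_toLinearMap_eq_span_singleton (a : R) :
    LinearMap.range (DistribSMul.toLinearMap Rᵐᵒᵖ R a) = span Rᵐᵒᵖ {a} := by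
  ext x
  simp [mem_span_singleton, MulOpposite.smul_eq_mul_unop, MulOpposite.op_surjective.exists]

theorem map_rdiv_eq_span_singleton_inf (a : R) (I : Submodule Rᵐᵒᵖ R) :
    (rdiv a I).map (DistribSMul.toLinearMap Rᵐᵒᵖ R a) = span Rᵐᵒᵖ {a} ⊓ I := by
  rw [rdiv_eq_comap, map_comap_eq, range_smul_toLinearMap_eq_span_singleton]

/-- `I` is an extension of `(I + aR)/aR` by `I ∩ aR = a · a⁻¹I`. -/
theorem fg_of_fg_sup_span_singleton_of_fg_rdiv {I : Submodule Rᵐᵒᵖ R} {a : R}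
    (hsup : (I ⊔ span Rᵐᵒᵖ {a}).FG) (hdiv : (rdiv a I).FG) : I.FG := by
  refine fg_of_fg_map_of_fg_inf_ker (span Rᵐᵒᵖ {a}).mkQ ?_ ?_
  · simpa only [Submodule.map_sup, mkQ_map_self, sup_bot_eq] using
      hsup.map (span Rᵐᵒᵖ {a}).mkQ
  · rw [ker_mkQ, inf_comm, ← map_rdiv_eq_span_singleton_inf]
    exact hdiv.map _

theorem isOkaFamily_fg : IsOkaFamily {I : Submodule Rᵐᵒᵖ R | I.FG} :=
  ⟨rightIdeal_top_fg, fun _ _ => fg_of_fg_sup_span_singleton_of_fg_rdiv⟩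

theorem IsOkaFamily.isCompletelyPrimeRightIdeal_of_maximal {F : Set (Submodule Rᵐᵒᵖ R)}
    (hF : IsOkaFamily F) {P : Submodule Rᵐᵒᵖ R} (hP : P ∉ F)
    (hmax : ∀ J, P < J → J ∈ F) :
    IsCompletelyPrimeRightIdeal P := by
  refine ⟨fun hP_top => hP (hP_top ▸ hF.1), fun a b haP hab => ?_⟩
  by_contra! ⟨ha, hb⟩
  have hsup : P < P ⊔ span Rᵐᵒᵖ {a} :=
    SetLike.lt_iff_le_and_exists.2
      ⟨le_sup_left, a, mem_sup_right (mem_span_singleton_self a), ha⟩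
  have hdiv : P < rdiv a P := SetLike.lt_iff_le_and_exists.2 ⟨haP, b, hab, hb⟩
  exact hP (hF.2 P a (hmax _ hsup) (hmax _ hdiv))

end

/-- The family of finitely generated right ideals is a right Oka family;
consequently a right ideal maximal with respect to not being finitely
generated is completely prime. -/
theorem fg_isOkaFamily_and_max_not_fg_completelyPrime {R : Type*} [Ring R] :
    IsOkaFamily {I : Submodule Rᵐᵒᵖ R | I.FG} ∧
    ∀ P : Submodule Rᵐᵒᵖ R, ¬ P.FG → (∀ J : Submodule Rᵐᵒᵖ R, P < J → J.FG) →
      IsCompletelyPrimeRightIdeal P :=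
  ⟨isOkaFamily_fg, fun _ hP hmax =>
    isOkaFamily_fg.isCompletelyPrimeRightIdeal_of_maximal hP hmax⟩
end

section
/- A ring R is right noetherian if and only if every completely prime right ideal of R is finitely generated. -/
open Submodule

theorem Submodule.fg_of_fg_sup_range_of_fg_comap {S M N : Type*} [Ring S] [AddCommGroup M]
    [Module S M] [AddCommGroup N] [Module S N] {P : Submodule S M} (f : N →ₗ[S] M)
    (hsup : (P ⊔ LinearMap.range f).FG) (hcomap : (P.comap f).FG) : P.FG := by
  refine fg_of_fg_map_of_fg_inf_ker (LinearMap.range f).mkQ ?_ ?_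
  · simpa only [map_sup, mkQ_map_self, sup_bot_eq] using hsup.map (LinearMap.range f).mkQ
  · rw [ker_mkQ, inf_comm, ← map_comap_eq]
    exact hcomap.map f

theorem Submodule.exists_le_maximal_not_fg {S M : Type*} [Semiring S] [AddCommMonoid M]
    [Module S M] {I : Submodule S M} (hI : ¬ I.FG) :
    ∃ P, I ≤ P ∧ Maximal (fun J : Submodule S M ↦ ¬ J.FG) P := by
  refine zorn_le_nonempty₀ _
    (fun c hc hchain J hJ ↦ ⟨sSup c, fun hfg ↦ ?_, fun _ ↦ le_sSup⟩) I hI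
  obtain ⟨K, hK, hle⟩ := (CompleteLattice.isCompactElement_iff_le_of_directed_sSup_le _ _).mp
    ((fg_iff_compact _).mp hfg) c ⟨J, hJ⟩ hchain.directedOn le_rfl
  exact hc hK (le_antisymm (le_sSup hK) hle ▸ hfg)

theorem isCompletelyPrimeRightIdeal_of_maximal_not_fg {R : Type*} [Ring R] {P : Submodule Rᵐᵒᵖ R}
    (hP : Maximal (fun J : Submodule Rᵐᵒᵖ R ↦ ¬ J.FG) P) : IsCompletelyPrimeRightIdeal P := by
  have fg_of_gt {J : Submodule Rᵐᵒᵖ R} (hle : P ≤ J) (hx : ∃ x ∈ J, x ∉ P) : J.FG :=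
    not_not.mp (hP.not_prop_of_gt (SetLike.lt_iff_le_and_exists.mpr ⟨hle, hx⟩))
  refine ⟨fun htop ↦ hP.prop (htop ▸ ⟨{1}, by simp [span_singleton_eq_top_iff]⟩),
    fun a b haP hab ↦ ?_⟩
  by_contra! ⟨ha, hb⟩
  let f := LinearMap.mulLeft Rᵐᵒᵖ a
  have hsup : (P ⊔ LinearMap.range f).FG :=
    fg_of_gt le_sup_left ⟨a, mem_sup_right ⟨1, mul_one a⟩, ha⟩
  have hcomap : (P.comap f).FG := fg_of_gt haP ⟨b, hab, hb⟩
  exact hP.prop (fg_of_fg_sup_range_of_fg_comap f hsup hcomap)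

/-- A noncommutative Cohen's theorem: a ring is right noetherian (every right
ideal is finitely generated) iff all of its completely prime right ideals are
finitely generated. -/
theorem rightNoetherian_iff_completelyPrimes_fg {R : Type*} [Ring R] :
    (∀ I : Submodule Rᵐᵒᵖ R, I.FG) ↔
      (∀ P : Submodule Rᵐᵒᵖ R, IsCompletelyPrimeRightIdeal P → P.FG) := by
  refine ⟨fun h P _ ↦ h P, fun h I ↦ ?_⟩
  by_contra hI
  obtain ⟨P, -, hP⟩ := exists_le_maximal_not_fg hI
  exact hP.prop (h P (isCompletelyPrimeRightIdeal_of_maximal_not_fg hP))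
end

section
/- Two right ideals I, J of a ring R satisfy R/I ≅ R/J as right R-modules if and only if there exists a ∈ R with I + aR = R and a⁻¹I = J. -/
theorem Submodule.nonempty_quotient_linearEquiv_iff
    {S M N : Type*} [Ring S] [AddCommGroup M] [Module S M] [AddCommGroup N] [Module S N]
    (p : Submodule S M) :
    Nonempty ((M ⧸ p) ≃ₗ[S] N) ↔
      ∃ f : M →ₗ[S] N, Function.Surjective f ∧ LinearMap.ker f = p := by
  constructor
  · rintro ⟨e⟩
    refine ⟨e.toLinearMap ∘ₗ p.mkQ, e.surjective.comp p.mkQ_surjective, ?_⟩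
    rw [LinearMap.ker_comp, e.ker, Submodule.comap_bot, Submodule.ker_mkQ]
  · rintro ⟨f, hf, rfl⟩
    exact ⟨f.quotKerEquivOfSurjective hf⟩

section RightIdeal

variable {R : Type*} [Ring R]

theorem range_mulLeft_op (a : R) :
    LinearMap.range (LinearMap.mulLeft Rᵐᵒᵖ a) = Submodule.span Rᵐᵒᵖ {a} := by
  ext x
  simp only [LinearMap.mem_range, Submodule.mem_span_singleton, LinearMap.mulLeft_apply,
    MulOpposite.exists, op_smul_eq_mul]

theorem ker_mkQ_comp_mulLeft (I : Submodule Rᵐᵒᵖ R) (a : R) :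
    LinearMap.ker (I.mkQ ∘ₗ LinearMap.mulLeft Rᵐᵒᵖ a) = rdiv a I := by
  ext r
  simp [rdiv]

theorem range_mkQ_comp_mulLeft_eq_top_iff (I : Submodule Rᵐᵒᵖ R) (a : R) :
    LinearMap.range (I.mkQ ∘ₗ LinearMap.mulLeft Rᵐᵒᵖ a) = ⊤ ↔
      I ⊔ Submodule.span Rᵐᵒᵖ {a} = ⊤ := by
  rw [LinearMap.range_comp, range_mulLeft_op, Submodule.map_mkQ_eq_top]

theorem surjective_mkQ_comp_mulLeft (I : Submodule Rᵐᵒᵖ R) :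
    Function.Surjective fun a : R ↦ I.mkQ ∘ₗ LinearMap.mulLeft Rᵐᵒᵖ a := by
  intro f
  obtain ⟨a, ha⟩ := I.mkQ_surjective (f 1)
  exact ⟨a, LinearMap.ext_ring_op (by simp [ha])⟩

end RightIdeal

/-- Two right ideals `I, J` satisfy `R/I ≅ R/J` as right `R`-modules iff there
exists `a ∈ R` with `I + aR = R` and `a⁻¹I = J`. -/
theorem quotient_iso_iff {R : Type*} [Ring R] (I J : Submodule Rᵐᵒᵖ R) :
    Nonempty ((R ⧸ I) ≃ₗ[Rᵐᵒᵖ] (R ⧸ J)) ↔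
      ∃ a : R, I ⊔ Submodule.span Rᵐᵒᵖ {a} = ⊤ ∧ rdiv a I = J := by
  calc Nonempty ((R ⧸ I) ≃ₗ[Rᵐᵒᵖ] (R ⧸ J))
      ↔ Nonempty ((R ⧸ J) ≃ₗ[Rᵐᵒᵖ] (R ⧸ I)) := ⟨fun ⟨e⟩ ↦ ⟨e.symm⟩, fun ⟨e⟩ ↦ ⟨e.symm⟩⟩
    _ ↔ ∃ f : R →ₗ[Rᵐᵒᵖ] R ⧸ I, Function.Surjective f ∧ LinearMap.ker f = J :=
      Submodule.nonempty_quotient_linearEquiv_iff J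
    _ ↔ ∃ a : R, I ⊔ Submodule.span Rᵐᵒᵖ {a} = ⊤ ∧ rdiv a I = J := by
      rw [(surjective_mkQ_comp_mulLeft I).exists]
      simp only [← LinearMap.range_eq_top, range_mkQ_comp_mulLeft_eq_top_iff,
        ker_mkQ_comp_mulLeft]
end

section
/- Let M be a module over a ring R such that R satisfies the ascending chain condition on point annihilators of M. Then the set of zero-divisors of M in R is a union of completely prime right ideals. -/
/-!
Under the chain condition every point annihilator `ann(m)` lies in a maximal one, so the
zero-divisors are the union of the maximal point annihilators. A maximal `P = ann(m)` is
completely prime: if `aP ⊆ P` and `a ∉ P`, then `ann(ma)` is a point annihilator containing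
`P`, hence equal to it, and `ab ∈ P` says exactly `b ∈ ann(ma)`.
-/

/-- The point annihilator `ann(m) = {r : R | m·r = 0}` of an element `m` of a
right `R`-module `M`, as a right ideal of `R`. -/
def pointAnn {R : Type*} [Ring R] {M : Type*} [AddCommGroup M] [Module Rᵐᵒᵖ M]
    (m : M) : Submodule Rᵐᵒᵖ R where
  carrier := {r : R | MulOpposite.op r • m = 0}
  add_mem' {x y} hx hy := by
    simp only [Set.mem_setOf_eq] at *
    rw [MulOpposite.op_add, add_smul, hx, hy, add_zero]
  zero_mem' := by simp
  smul_mem' c x hx := by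
    simp only [Set.mem_setOf_eq] at *
    rw [MulOpposite.smul_eq_mul_unop, MulOpposite.op_mul, MulOpposite.op_unop, mul_smul,
      hx, smul_zero]

theorem exists_le_maximal_of_monotone_stabilizes {α : Type*} [PartialOrder α] {P : α → Prop}
    (hacc : ∀ f : ℕ →o α, (∀ n, P (f n)) → ∃ n, ∀ k, n ≤ k → f k = f n)
    {a : α} (ha : P a) : ∃ b, a ≤ b ∧ Maximal P b := by
  have : WellFoundedGT {x // P x} := wellFoundedGT_iff_monotone_chain_condition.2 fun f ↦ by
    obtain ⟨n, hn⟩ := hacc ((OrderHom.Subtype.val P).comp f) fun n ↦ (f n).2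
    exact ⟨n, fun k hk ↦ (Subtype.ext (hn k hk)).symm⟩
  obtain ⟨b, hab, -, hb⟩ :=
    exists_maximal_ge_of_wellFoundedGT (fun _ : {x // P x} ↦ True) ⟨a, ha⟩ trivial
  exact ⟨b, hab, b.2, fun c hc hbc ↦ hb (y := ⟨c, hc⟩) trivial hbc⟩

section PointAnn

variable {R : Type*} [Ring R] {M : Type*} [AddCommGroup M] [Module Rᵐᵒᵖ M]

theorem mem_pointAnn {m : M} {r : R} : r ∈ pointAnn m ↔ MulOpposite.op r • m = 0 := Iff.rfl

theorem mem_pointAnn_smul {m : M} {a b : R} :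
    b ∈ pointAnn (MulOpposite.op a • m) ↔ a * b ∈ pointAnn m := by
  rw [mem_pointAnn, mem_pointAnn, MulOpposite.op_mul, mul_smul]

theorem pointAnn_ne_top {m : M} (hm : m ≠ 0) : pointAnn (R := R) m ≠ ⊤ := fun h ↦ hm <| by
  simpa using mem_pointAnn.1 (h ▸ Submodule.mem_top : (1 : R) ∈ pointAnn m)

variable (M) in
def IsPointAnn (I : Submodule Rᵐᵒᵖ R) : Prop :=
  ∃ m : M, m ≠ 0 ∧ pointAnn m = I

theorem Maximal.isCompletelyPrimeRightIdeal {P : Submodule Rᵐᵒᵖ R}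
    (hP : Maximal (IsPointAnn M) P) : IsCompletelyPrimeRightIdeal P := by
  obtain ⟨m, hm, rfl⟩ := hP.prop
  refine ⟨pointAnn_ne_top hm, fun a b haP hab ↦ or_iff_not_imp_left.2 fun ha ↦ ?_⟩
  have hle : pointAnn m ≤ pointAnn (MulOpposite.op a • m) := fun p hp ↦
    mem_pointAnn_smul.2 (haP p hp)
  rw [hP.eq_of_le ⟨_, ha, rfl⟩ hle]
  exact mem_pointAnn_smul.2 hab

theorem exists_pointAnn_le_maximal
    (hacc : ∀ f : ℕ →o Submodule Rᵐᵒᵖ R,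
      (∀ n : ℕ, ∃ m : M, m ≠ 0 ∧ f n = pointAnn m) → ∃ n, ∀ k, n ≤ k → f k = f n)
    {m : M} (hm : m ≠ 0) : ∃ P, pointAnn (R := R) m ≤ P ∧ Maximal (IsPointAnn M) P :=
  exists_le_maximal_of_monotone_stabilizes (P := IsPointAnn M)
    (fun f hf ↦ hacc f fun n ↦ let ⟨m, hm, h⟩ := hf n; ⟨m, hm, h.symm⟩) ⟨m, hm, rfl⟩

end PointAnn

/-- If `R` satisfies the ascending chain condition on point annihilators of a
module `M`, then the set of zero-divisors of `M` in `R` is a union of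
completely prime right ideals. -/
theorem zeroDivisors_union_of_completelyPrimes
    {R : Type*} [Ring R] {M : Type*} [AddCommGroup M] [Module Rᵐᵒᵖ M]
    (hacc : ∀ f : ℕ →o Submodule Rᵐᵒᵖ R,
      (∀ n : ℕ, ∃ m : M, m ≠ 0 ∧ f n = pointAnn m) → ∃ n, ∀ k, n ≤ k → f k = f n) :
    ∃ S : Set (Submodule Rᵐᵒᵖ R), (∀ P ∈ S, IsCompletelyPrimeRightIdeal P) ∧
      {z : R | ∃ m : M, m ≠ 0 ∧ MulOpposite.op z • m = 0} = ⋃ P ∈ S, (P : Set R) := by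
  refine ⟨{P | Maximal (IsPointAnn M) P}, fun P hP ↦ hP.isCompletelyPrimeRightIdeal, ?_⟩
  ext z
  simp only [Set.mem_iUnion, SetLike.mem_coe, exists_prop]
  constructor
  · rintro ⟨m, hm, hz⟩
    obtain ⟨P, hmP, hP⟩ := exists_pointAnn_le_maximal hacc hm
    exact ⟨P, hP, hmP (mem_pointAnn.2 hz)⟩
  · rintro ⟨P, ⟨⟨m, hm, rfl⟩, -⟩, hz⟩
    exact ⟨m, hm, hz⟩
end

section
/- A nonzero ring R is a domain if and only if every nonzero completely prime right ideal of R contains a left regular element. -/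
open Filter

section germAnn

variable {R : Type*} [Semiring R]

def germAnn (F : Filter R) : Submodule Rᵐᵒᵖ R where
  carrier := {s | ∀ᶠ m in F, m * s = 0}
  zero_mem' := by
    filter_upwards with m using mul_zero m
  add_mem' := by
    intro x y hx hy
    filter_upwards [hx, hy] with m hmx hmy
    rw [mul_add, hmx, hmy, add_zero]
  smul_mem' := by
    intro r x hx
    filter_upwards [hx] with m hmx
    change m * (x * r.unop) = 0
    rw [← mul_assoc, hmx, zero_mul]

theorem mem_germAnn {F : Filter R} {s : R} : s ∈ germAnn F ↔ ∀ᶠ m in F, m * s = 0 :=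
  Iff.rfl

theorem mem_germAnn_pure {a s : R} : s ∈ germAnn (pure a) ↔ a * s = 0 :=
  Iff.rfl

theorem mem_germAnn_bind {ι : Type*} {F : Filter ι} {G : ι → Filter R} {s : R} :
    s ∈ germAnn (F.bind G) ↔ ∀ᶠ i in F, s ∈ germAnn (G i) :=
  eventually_bind

theorem mem_germAnn_map_mul_right {F : Filter R} {x s : R} :
    s ∈ germAnn (F.map (· * x)) ↔ x * s ∈ germAnn F := by
  simp only [mem_germAnn, eventually_map, mul_assoc]

theorem germAnn_le_germAnn_bind_of_atTop {ι : Type*} [Preorder ι] [IsDirectedOrder ι]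
    [Nonempty ι] (V : ι → Ultrafilter R) (hV : Monotone fun i ↦ germAnn (V i : Filter R))
    (i : ι) : germAnn (V i : Filter R) ≤ germAnn ((Ultrafilter.of atTop).bind V : Filter R) :=
  fun _ hs ↦ mem_germAnn_bind.mpr <|
    Ultrafilter.of_le atTop (eventually_ge_atTop i |>.mono fun _ hj ↦ hV hj hs)

variable (R) in
def nonzeroGermAnns : Set (Submodule Rᵐᵒᵖ R) :=
  {P | ∃ V : Ultrafilter R, (∀ᶠ m in (V : Filter R), m ≠ 0) ∧ germAnn (V : Filter R) = P}

theorem exists_ne_zero_mul_eq_zero_of_mem_nonzeroGermAnns {P : Submodule Rᵐᵒᵖ R}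
    (hP : P ∈ nonzeroGermAnns R) {s : R} (hs : s ∈ P) : ∃ m ≠ 0, m * s = 0 := by
  obtain ⟨V, hV, rfl⟩ := hP
  exact (hV.and hs).exists

theorem ne_top_of_mem_nonzeroGermAnns {P : Submodule Rᵐᵒᵖ R} (hP : P ∈ nonzeroGermAnns R) :
    P ≠ ⊤ := fun htop ↦ by
  have h1 : (1 : R) ∈ P := htop ▸ Submodule.mem_top
  obtain ⟨m, hm, hm1⟩ := exists_ne_zero_mul_eq_zero_of_mem_nonzeroGermAnns hP h1
  exact hm (by simpa using hm1)

theorem nonzeroGermAnns_chain_bounded (c : Set (Submodule Rᵐᵒᵖ R)) (hc : c ⊆ nonzeroGermAnns R)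
    (hchain : IsChain (· ≤ ·) c) (y : Submodule Rᵐᵒᵖ R) (hy : y ∈ c) :
    ∃ ub ∈ nonzeroGermAnns R, ∀ z ∈ c, z ≤ ub := by
  choose V hV_ne hV_eq using fun P : c ↦ hc P.2
  have : Nonempty c := ⟨⟨y, hy⟩⟩
  have : IsDirectedOrder c := hchain.directedOn.isDirectedOrder
  have hmono : Monotone fun P : c ↦ germAnn (V P : Filter R) := fun P Q hPQ ↦ by
    simpa only [hV_eq] using Subtype.coe_le_coe.mpr hPQ
  refine ⟨_, ⟨(Ultrafilter.of atTop).bind V, ?_, rfl⟩, fun z hz ↦ ?_⟩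
  · exact eventually_bind.mpr (.of_forall hV_ne)
  · simpa only [hV_eq] using germAnn_le_germAnn_bind_of_atTop V hmono ⟨z, hz⟩

end germAnn

theorem isCompletelyPrimeRightIdeal_of_maximal_nonzeroGermAnns {R : Type*} [Ring R]
    {P : Submodule Rᵐᵒᵖ R} (hP : Maximal (· ∈ nonzeroGermAnns R) P) :
    IsCompletelyPrimeRightIdeal P := by
  refine ⟨ne_top_of_mem_nonzeroGermAnns hP.prop, fun x y hxP hxy ↦ ?_⟩
  obtain ⟨V, -, rfl⟩ := hP.prop
  by_cases hx : x ∈ germAnn (V : Filter R)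
  · exact .inl hx
  right
  have hVx : germAnn (V : Filter R) ≤ germAnn (V.map (· * x) : Filter R) := fun p hp ↦
    mem_germAnn_map_mul_right.mpr (hxP p hp)
  have hVx_mem : germAnn (V.map (· * x) : Filter R) ∈ nonzeroGermAnns R :=
    ⟨V.map (· * x), eventually_map.mpr (Ultrafilter.eventually_not.mpr hx), rfl⟩
  rw [hP.eq_of_le hVx_mem hVx]
  exact mem_germAnn_map_mul_right.mpr hxy

/-- A nonzero ring `R` is a domain iff every nonzero completely prime right
ideal of `R` contains a left regular element. -/
theorem isDomain_iff_completelyPrimes_contain_leftRegular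
    {R : Type*} [Ring R] [Nontrivial R] :
    IsDomain R ↔
      ∀ P : Submodule Rᵐᵒᵖ R, IsCompletelyPrimeRightIdeal P → P ≠ ⊥ →
        ∃ s ∈ P, ∀ r : R, r * s = 0 → r = 0 := by
  refine ⟨fun _ P _ hP ↦ ?_, fun H ↦ ?_⟩
  · obtain ⟨s, hsP, hs⟩ := P.ne_bot_iff.mp hP
    exact ⟨s, hsP, fun r hr ↦ (mul_eq_zero.mp hr).resolve_right hs⟩
  suffices NoZeroDivisors R from NoZeroDivisors.to_isDomain R
  refine ⟨fun {a b} hab ↦ or_iff_not_and_not.mpr fun ⟨ha, hb⟩ ↦ ?_⟩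
  have hpure : germAnn (pure a) ∈ nonzeroGermAnns R := ⟨pure a, eventually_pure.mpr ha, rfl⟩
  obtain ⟨P, hbP, hPmax⟩ := zorn_le_nonempty₀ _ nonzeroGermAnns_chain_bounded _ hpure
  have hPbot : P ≠ ⊥ := P.ne_bot_iff.mpr ⟨b, hbP (mem_germAnn_pure.mpr hab), hb⟩
  obtain ⟨s, hsP, hs⟩ := H P (isCompletelyPrimeRightIdeal_of_maximal_nonzeroGermAnns hPmax) hPbot
  obtain ⟨m, hm, hms⟩ := exists_ne_zero_mul_eq_zero_of_mem_nonzeroGermAnns hPmax.prop hsP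
  exact hm (hs m hms)
end

section
/- A nonzero right R-module M is monoform (every nonzero submodule of M is dense in M) if and only if M is uniform and every nonzero homomorphism from any cyclic submodule C of M to M is injective. -/
/-- A submodule `N` of a right `R`-module `M` is dense if for all `x, y ∈ M`
with `x ≠ 0`, `x · (y⁻¹N) ≠ 0`, i.e. there is `r ∈ R` with `y·r ∈ N` and
`x·r ≠ 0`. -/
def IsDenseSubmodule {R : Type*} [Ring R] {M : Type*} [AddCommGroup M]
    [Module Rᵐᵒᵖ M] (N : Submodule Rᵐᵒᵖ M) : Prop :=
  ∀ x y : M, x ≠ 0 → ∃ r : R, MulOpposite.op r • y ∈ N ∧ MulOpposite.op r • x ≠ 0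

/-!
If density of a nonzero `N` failed at `(x, y)`, i.e. `y r ∈ N` always forced `x r = 0`, then
`ann y ⊆ ann x`, so `y ↦ x` would define a nonzero, hence injective, homomorphism `yR → M`;
uniformity gives `0 ≠ y s ∈ N`, and injectivity then gives `x s ≠ 0`. Conversely, a homomorphism
`U → M` with dense kernel vanishes, and a dense submodule meets every nonzero submodule.
-/

open Submodule

section SpanSingleton

variable {S M : Type*} [Ring S] [AddCommGroup M] [Module S M]

/-- `S ∙ y ≃ S ⧸ ann y`, so `y ↦ x` is well defined as soon as `ann y ⊆ ann x`. -/
theorem exists_linearMap_spanSingleton_apply_self {x y : M}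
    (h : Ideal.torsionOf S M y ≤ Ideal.torsionOf S M x) :
    ∃ f : (S ∙ y) →ₗ[S] M, f ⟨y, mem_span_singleton_self y⟩ = x := by
  refine ⟨((Ideal.torsionOf S M y).liftQ (LinearMap.toSpanSingleton S M x) h).comp
    (Ideal.quotTorsionOfEquivSpanSingleton S M y).symm.toLinearMap, ?_⟩
  have hy : (Ideal.quotTorsionOfEquivSpanSingleton S M y).symm ⟨y, mem_span_singleton_self y⟩ =
      Submodule.Quotient.mk 1 := by
    rw [LinearEquiv.symm_apply_eq, Ideal.quotTorsionOfEquivSpanSingleton_apply_mk, one_smul]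
  rw [LinearMap.comp_apply, LinearEquiv.coe_coe, hy]
  exact one_smul S x

end SpanSingleton

section Dense

variable {R M : Type*} [Ring R] [AddCommGroup M] [Module Rᵐᵒᵖ M]

theorem IsDenseSubmodule.inf_ne_bot {N N' : Submodule Rᵐᵒᵖ M} (hN : IsDenseSubmodule N)
    (hN' : N' ≠ ⊥) : N ⊓ N' ≠ ⊥ := by
  obtain ⟨x, hxN', hx⟩ := exists_mem_ne_zero_of_ne_bot hN'
  obtain ⟨r, hrN, hrx⟩ := hN x x hx
  exact (Submodule.ne_bot_iff _).mpr ⟨_, ⟨hrN, N'.smul_mem _ hxN'⟩, hrx⟩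

theorem IsDenseSubmodule.eq_zero_of_ker {U : Submodule Rᵐᵒᵖ M} {f : U →ₗ[Rᵐᵒᵖ] M}
    (hf : IsDenseSubmodule ((LinearMap.ker f).map U.subtype)) : f = 0 := by
  by_contra hne
  obtain ⟨u, hu⟩ : ∃ u, f u ≠ 0 := by
    by_contra! h
    exact hne (LinearMap.ext h)
  obtain ⟨r, ⟨v, hv, hvu⟩, hr⟩ := hf (f u) u hu
  have hv' : v = MulOpposite.op r • u := Subtype.ext hvu
  rw [← map_smul, ← hv'] at hr
  exact hr hv

theorem isDenseSubmodule_of_uniform_of_cyclic_homs_injective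
    (huni : ∀ N N' : Submodule Rᵐᵒᵖ M, N ≠ ⊥ → N' ≠ ⊥ → N ⊓ N' ≠ ⊥)
    (hinj : ∀ (c : M) (f : (Rᵐᵒᵖ ∙ c) →ₗ[Rᵐᵒᵖ] M), f ≠ 0 → Function.Injective f)
    {N : Submodule Rᵐᵒᵖ M} (hN : N ≠ ⊥) : IsDenseSubmodule N := by
  intro x y hx
  by_cases hann : Ideal.torsionOf Rᵐᵒᵖ M y ≤ Ideal.torsionOf Rᵐᵒᵖ M x
  · obtain ⟨f, hfy⟩ := exists_linearMap_spanSingleton_apply_self hann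
    have hf : f ≠ 0 := fun h => hx (by rw [← hfy, h, LinearMap.zero_apply])
    have hy : y ≠ 0 := by
      rintro rfl
      exact hx (by rw [← hfy, ← ZeroMemClass.zero_def, map_zero])
    obtain ⟨z, ⟨hzy, hzN⟩, hz⟩ :=
      exists_mem_ne_zero_of_ne_bot (huni _ N (by rwa [Ne, span_singleton_eq_bot]) hN)
    obtain ⟨s, rfl⟩ := mem_span_singleton.mp hzy
    refine ⟨s.unop, hzN, fun hsx => hz ?_⟩
    rw [MulOpposite.op_unop] at hsx
    have : f (s • ⟨y, mem_span_singleton_self y⟩) = f 0 := by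
      rw [map_smul, hfy, map_zero, hsx]
    simpa using congrArg Subtype.val (hinj y f hf this)
  · obtain ⟨s, hsy, hsx⟩ := SetLike.not_le_iff_exists.mp hann
    rw [Ideal.mem_torsionOf_iff] at hsy hsx
    exact ⟨s.unop, by simp [hsy], by simpa using hsx⟩

end Dense

theorem monoform_iff_uniform_and_cyclic_homs_injective_general
    {R : Type*} [Ring R] {M : Type*} [AddCommGroup M] [Module Rᵐᵒᵖ M] :
    (∀ N : Submodule Rᵐᵒᵖ M, N ≠ ⊥ → IsDenseSubmodule N) ↔
      ((∀ N N' : Submodule Rᵐᵒᵖ M, N ≠ ⊥ → N' ≠ ⊥ → N ⊓ N' ≠ ⊥) ∧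
        ∀ (c : M) (f : (Submodule.span Rᵐᵒᵖ {c} : Submodule Rᵐᵒᵖ M) →ₗ[Rᵐᵒᵖ] M),
          f ≠ 0 → Function.Injective f) := by
  refine ⟨fun hdense => ⟨fun N N' hN hN' => (hdense N hN).inf_ne_bot hN', ?_⟩,
    fun ⟨huni, hinj⟩ _ hN => isDenseSubmodule_of_uniform_of_cyclic_homs_injective huni hinj hN⟩
  intro c f hf
  rw [← LinearMap.ker_eq_bot]
  by_contra hker
  refine hf (hdense _ ?_).eq_zero_of_ker
  rwa [Ne, ← map_bot (Rᵐᵒᵖ ∙ c).subtype, (map_injective_of_injective (injective_subtype _)).eq_iff]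

/-- A nonzero module `M` is monoform (every nonzero submodule is dense) iff it
is uniform and every nonzero homomorphism from a cyclic submodule of `M` to `M`
is injective. -/
theorem monoform_iff_uniform_and_cyclic_homs_injective
    {R : Type*} [Ring R] {M : Type*} [AddCommGroup M] [Module Rᵐᵒᵖ M]
    [Nontrivial M] :
    (∀ N : Submodule Rᵐᵒᵖ M, N ≠ ⊥ → IsDenseSubmodule N) ↔
      ((∀ N N' : Submodule Rᵐᵒᵖ M, N ≠ ⊥ → N' ≠ ⊥ → N ⊓ N' ≠ ⊥) ∧
        ∀ (c : M) (f : (Submodule.span Rᵐᵒᵖ {c} : Submodule Rᵐᵒᵖ M) →ₗ[Rᵐᵒᵖ] M),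
          f ≠ 0 → Function.Injective f) :=
  monoform_iff_uniform_and_cyclic_homs_injective_general
end

section
/- Let F be a divisible right Oka family in a ring R (i.e., a right Oka family such that I ∈ F implies a⁻¹I ∈ F for all a ∈ R). Then every right ideal P maximal in the complement of F is comonoform, meaning R/P is a monoform module (every nonzero submodule of R/P is dense in R/P). -/
/-
Suppose `N ≠ 0` in `R/P` is not dense, witnessed by `x = a + P ≠ 0` and `y = b + P`; with
`J ⊋ P` the preimage of `N` this says `b⁻¹J ⊆ a⁻¹P`. Zorn enlarges `J` to a right ideal `K`
with `b⁻¹K = a⁻¹P`. As `K ⊋ P`, `K ∈ F`, so `a⁻¹P = b⁻¹K ∈ F` by divisibility; also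
`P + aR ⊋ P` lies in `F`, and the Oka property forces `P ∈ F`, a contradiction.
-/

section

variable {R : Type*} [Ring R]

@[simp]
theorem mem_rdiv {a r : R} {I : Submodule Rᵐᵒᵖ R} : r ∈ rdiv a I ↔ a * r ∈ I := Iff.rfl

theorem quotient_op_smul_mk (P : Submodule Rᵐᵒᵖ R) (a r : R) :
    MulOpposite.op r • (Submodule.Quotient.mk a : R ⧸ P) = Submodule.Quotient.mk (a * r) := by
  rw [← Submodule.Quotient.mk_smul, op_smul_eq_mul]

theorem rdiv_sup_span_le {a b t : R} {K Q : Submodule Rᵐᵒᵖ R} (hK : rdiv b K ≤ rdiv a Q)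
    (ht : t ∈ rdiv a Q) : rdiv b (K ⊔ Submodule.span Rᵐᵒᵖ {b * t}) ≤ rdiv a Q := by
  intro r hr
  obtain ⟨u, hu, v, hv, huv⟩ := Submodule.mem_sup.mp hr
  obtain ⟨s, rfl⟩ := Submodule.mem_span_singleton.mp hv
  have hts : t * s.unop ∈ rdiv a Q := (rdiv a Q).smul_mem s ht
  have hrest : r - t * s.unop ∈ rdiv b K := by
    have : b * (r - t * s.unop) = u := by
      rw [mul_sub, ← huv, ← mul_assoc, ← MulOpposite.smul_eq_mul_unop, add_sub_cancel_right]
    simpa [this] using hu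
  simpa using (rdiv a Q).add_mem (hK hrest) hts

theorem exists_le_rdiv_eq {a b : R} {I Q : Submodule Rᵐᵒᵖ R} (h : rdiv b I ≤ rdiv a Q) :
    ∃ K, I ≤ K ∧ rdiv b K = rdiv a Q := by
  obtain ⟨K, hIK, ⟨-, hK⟩, hmax⟩ := zorn_le_nonempty₀ {K | I ≤ K ∧ rdiv b K ≤ rdiv a Q}
    (fun c hc hchain K₀ hK₀ => by
      refine ⟨sSup c, ⟨(hc hK₀).1.trans (le_sSup hK₀), fun r hr => ?_⟩, fun _ => le_sSup⟩
      obtain ⟨K', hK'c, hrK'⟩ :=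
        (Submodule.mem_sSup_of_directed ⟨K₀, hK₀⟩ hchain.directedOn).mp hr
      exact (hc hK'c).2 hrK') I ⟨le_rfl, h⟩
  refine ⟨K, hIK, hK.antisymm fun t ht => ?_⟩
  have hbt := hmax ⟨hIK.trans le_sup_left, rdiv_sup_span_le hK ht⟩ le_sup_left
  exact hbt (Submodule.mem_sup_right (Submodule.mem_span_singleton_self (b * t)))

theorem lt_comap_mkQ_of_ne_bot {P : Submodule Rᵐᵒᵖ R} {N : Submodule Rᵐᵒᵖ (R ⧸ P)} (hN : N ≠ ⊥) :
    P < N.comap P.mkQ := by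
  simpa [Submodule.comap_bot] using
    Submodule.comap_strictMono_of_surjective P.mkQ_surjective (bot_lt_iff_ne_bot.mpr hN)

theorem isDenseSubmodule_of_forall_not_rdiv_comap_le {P : Submodule Rᵐᵒᵖ R}
    {N : Submodule Rᵐᵒᵖ (R ⧸ P)} (h : ∀ a b : R, a ∉ P → ¬ rdiv b (N.comap P.mkQ) ≤ rdiv a P) :
    IsDenseSubmodule N := by
  rintro x y hx
  obtain ⟨a, rfl⟩ := Submodule.Quotient.mk_surjective P x
  obtain ⟨b, rfl⟩ := Submodule.Quotient.mk_surjective P y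
  have ha : a ∉ P := fun haP => hx ((Submodule.Quotient.mk_eq_zero P).mpr haP)
  obtain ⟨r, hbr, har⟩ := Set.not_subset.mp (h a b ha)
  refine ⟨r, ?_, ?_⟩
  · simpa [quotient_op_smul_mk] using hbr
  · simpa [quotient_op_smul_mk, Submodule.Quotient.mk_eq_zero] using har

end

/-- If `F` is a divisible right Oka family, then every right ideal `P` maximal
in the complement of `F` is comonoform: `R/P` is nonzero and monoform. -/
theorem divisible_oka_max_comonoform
    {R : Type*} [Ring R] (F : Set (Submodule Rᵐᵒᵖ R)) (hF : IsOkaFamily F)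
    (hdiv : ∀ I ∈ F, ∀ a : R, rdiv a I ∈ F)
    (P : Submodule Rᵐᵒᵖ R) (hP : P ∉ F)
    (hmax : ∀ J : Submodule Rᵐᵒᵖ R, P < J → J ∈ F) :
    Nontrivial (R ⧸ P) ∧
      ∀ N : Submodule Rᵐᵒᵖ (R ⧸ P), N ≠ ⊥ → IsDenseSubmodule N := by
  refine ⟨Submodule.Quotient.nontrivial_iff.mpr fun hPtop => hP (hPtop ▸ hF.1), ?_⟩
  intro N hN
  refine isDenseSubmodule_of_forall_not_rdiv_comap_le fun a b ha hle => hP ?_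
  obtain ⟨K, hJK, hKa⟩ := exists_le_rdiv_eq hle
  have hKF : K ∈ F := hmax K ((lt_comap_mkQ_of_ne_bot hN).trans_le hJK)
  have hrdivF : rdiv a P ∈ F := hKa ▸ hdiv K hKF b
  exact hF.2 P a (hmax _ (Submodule.lt_sup_iff_notMem.mpr ha)) hrdivF
end
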